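/- Let X be a topological space. The following are equivalent: (1) X is homeomorphic to Spec(M) for some commutative monoid M; (2) X is T₀ and there is a monoidal base B of X such that (X, B) is an 𝕄-complete join semilattice and X satisfies condition (*). -/

import Mathlib

open Set Topology TopologicalSpace

universe u v

/-- An ideal of a commutative monoid: closed under multiplication by arbitrary elements. -/
def IsMonoidIdeal {M : Type*} [CommMonoid M] (I : Set M) : Prop :=
  ∀ x ∈ I, ∀ m : M, x * m ∈ I

/-- A prime ideal of a commutative monoid: an ideal whose complement is a submonoid
(contains `1` and is closed under multiplication). -/
def IsMonoidPrime {M : Type*} [CommMonoid M] (p : Set M) : Prop :=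
  IsMonoidIdeal p ∧ (1 : M) ∉ p ∧ ∀ x y : M, x ∉ p → y ∉ p → x * y ∉ p

/-- The Kato spectrum of a commutative monoid: the set of its prime ideals. -/
def KatoSpec (M : Type*) [CommMonoid M] : Type _ :=
  {p : Set M // IsMonoidPrime p}

/-- The basic open set `D(f) = {p : f ∉ p}`. -/
def KatoD {M : Type*} [CommMonoid M] (f : M) : Set (KatoSpec M) :=
  {p | f ∉ p.1}

/-- The topology on the Kato spectrum, generated by the sets `D(f)`. -/
instance KatoSpec.instTopologicalSpace (M : Type*) [CommMonoid M] :
    TopologicalSpace (KatoSpec M) :=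
  TopologicalSpace.generateFrom (Set.range fun f : M => KatoD f)

/-- A blob: the intersection of all open sets containing some point `a`. -/
def IsBlob {X : Type*} [TopologicalSpace X] (A : Set X) : Prop :=
  ∃ a : X, A = ⋂₀ {U : Set X | IsOpen U ∧ a ∈ U}

/-- Condition (*): whenever an intersection of a family of open blobs is contained in an
open set `V`, some finite subfamily already has intersection contained in `V`. -/
def CondStar (X : Type*) [TopologicalSpace X] : Prop :=
  ∀ S : Set (Set X), (∀ U ∈ S, IsOpen U ∧ IsBlob U) →
    ∀ V : Set X, IsOpen V → ⋂₀ S ⊆ V →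
      ∃ T : Finset (Set X), ↑T ⊆ S ∧ ⋂₀ (T : Set (Set X)) ⊆ V

/-- A monoidal base: a base of open sets containing the whole space and closed under
finite (binary) intersections. -/
structure IsMonoidalBase {X : Type*} [TopologicalSpace X] (B : Set (Set X)) : Prop where
  open_mem : ∀ U ∈ B, IsOpen U
  is_base : ∀ V : Set X, IsOpen V → ∀ x ∈ V, ∃ U ∈ B, x ∈ U ∧ U ⊆ V
  univ_mem : Set.univ ∈ B
  inter_mem : ∀ U ∈ B, ∀ V ∈ B, U ∩ V ∈ B

/-- `(X, B)` is an 𝕄-complete join semilattice with respect to the explicit data of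
a partial order `le` and a supremum operator `s`. -/
def IsMCJSWith {X : Type*} (B : Set (Set X)) (le : X → X → Prop) (s : Set X → X) : Prop :=
  (∀ x, le x x) ∧
  (∀ x y z, le x y → le y z → le x z) ∧
  (∀ x y, le x y → le y x → x = y) ∧
  (∀ A : Set X, (∀ a ∈ A, le a (s A)) ∧ ∀ b : X, (∀ a ∈ A, le a b) → le (s A) b) ∧
  (∀ A : Set X, ∀ U ∈ B, (A ⊆ U ↔ s A ∈ U))

/-- `(X, B)` is an 𝕄-complete join semilattice: there is a partial order on `X` in which
every subset has a least upper bound, such that for `U ∈ B`, `A ⊆ U ↔ sup A ∈ U`. -/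
def MCJS {X : Type*} (B : Set (Set X)) : Prop :=
  ∃ (le : X → X → Prop) (s : Set X → X), IsMCJSWith B le s

/-- An isomorphism of spaces-with-monoidal-bases: a bijection such that both it and its
inverse pull back base elements to base elements. -/
def MIso {X Y : Type*} (B : Set (Set X)) (C : Set (Set Y)) : Prop :=
  ∃ f : X → Y, Function.Bijective f ∧ (∀ V ∈ C, f ⁻¹' V ∈ B) ∧ (∀ U ∈ B, f '' U ∈ C)

/-- The topology on the power set `𝒫(X)` generated by the sets `𝒫(U) = {A | A ⊆ U}`, `U ∈ B`. -/
def ExpTop {X : Type*} (B : Set (Set X)) : TopologicalSpace (Set X) :=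
  TopologicalSpace.generateFrom {s : Set (Set X) | ∃ U ∈ B, s = {A : Set X | A ⊆ U}}

/-- The equivalence relation `A ∼ A'` iff `A` and `A'` belong to the same open sets of `𝒫(X)`. -/
def ExpSetoid {X : Type*} (B : Set (Set X)) : Setoid (Set X) where
  r A A' := ∀ s : Set (Set X), (ExpTop B).IsOpen s → (A ∈ s ↔ A' ∈ s)
  iseqv := ⟨fun _ _ _ => Iff.rfl, fun h s hs => (h s hs).symm,
    fun h h' s hs => (h s hs).trans (h' s hs)⟩

/-- The exponential `E(X,B)`: the quotient of `𝒫(X)` identifying sets lying in the same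
open sets. -/
def ExpSpace {X : Type*} (B : Set (Set X)) : Type _ :=
  Quotient (ExpSetoid B)

/-- The class `[A]` of a subset `A ⊆ X` in `E(X,B)`. -/
def expMk {X : Type*} (B : Set (Set X)) (A : Set X) : ExpSpace B :=
  Quotient.mk (ExpSetoid B) A

/-- The quotient topology on `E(X,B)`. -/
instance ExpSpace.instTopologicalSpace {X : Type*} (B : Set (Set X)) :
    TopologicalSpace (ExpSpace B) :=
  (ExpTop B).coinduced (expMk B)

/-- The basic subset `Ũ = {[A] : A ⊆ U}` of `E(X,B)`. -/
def expBasic {X : Type*} (B : Set (Set X)) (U : Set X) : Set (ExpSpace B) :=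
  {q | ∃ A : Set X, q = expMk B A ∧ A ⊆ U}

/-- The monoidal base `B̃ = {Ũ : U ∈ B}` of `E(X,B)`. -/
def expBase {X : Type*} (B : Set (Set X)) : Set (Set (ExpSpace B)) :=
  {s | ∃ U ∈ B, s = expBasic B U}

/-- The natural map `i : X → E(X,B)`, `x ↦ [{x}]`. -/
def expI {X : Type*} (B : Set (Set X)) (x : X) : ExpSpace B :=
  expMk B {x}

/-- The canonical supremum in `E(X,B)`: the class of the union of all representatives. -/
def expSup {X : Type*} (B : Set (Set X)) (S : Set (ExpSpace B)) : ExpSpace B :=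
  expMk B (⋃₀ {A : Set X | expMk B A ∈ S})

/-- The specialization order: `a ≤ b` iff `b ∈ closure {a}`. -/
def specLE {Y : Type*} [TopologicalSpace Y] (a b : Y) : Prop :=
  b ∈ closure {a}

/-- The commutative monoid `(B, ∩)` attached to a monoidal base `B`, with identity `X`. -/
def baseMonoid {X : Type*} [TopologicalSpace X] {B : Set (Set X)} (hB : IsMonoidalBase B) :
    CommMonoid ↥B where
  mul U V := ⟨U.1 ∩ V.1, hB.inter_mem _ U.2 _ V.2⟩
  one := ⟨Set.univ, hB.univ_mem⟩
  mul_assoc U V W := Subtype.ext (Set.inter_assoc _ _ _)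
  mul_comm U V := Subtype.ext (Set.inter_comm _ _)
  one_mul U := Subtype.ext (Set.univ_inter _)
  mul_one U := Subtype.ext (Set.inter_univ _)


section KatoBasics

variable {M : Type*} [CommMonoid M]

theorem katoD_isOpen (f : M) : IsOpen (KatoD f) :=
  TopologicalSpace.GenerateOpen.basic _ ⟨f, rfl⟩

theorem katoD_one : KatoD (1 : M) = Set.univ := by
  ext p; simp [KatoD, p.2.2.1]

theorem katoD_mul (f g : M) : KatoD (f * g) = KatoD f ∩ KatoD g := by
  ext p
  constructor
  · intro h
    constructor
    · intro hf; exact h (p.2.1 f hf g)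
    · intro hg; exact h (by rw [mul_comm]; exact p.2.1 g hg f)
  · rintro ⟨hf, hg⟩
    exact p.2.2.2 f g hf hg

theorem katoD_base : ∀ V : Set (KatoSpec M), IsOpen V → ∀ p ∈ V,
    ∃ f : M, p ∈ KatoD f ∧ KatoD f ⊆ V := by
  intro V hV
  induction hV with
  | basic s hs => rintro p hp; obtain ⟨f, rfl⟩ := hs; exact ⟨f, hp, subset_rfl⟩
  | univ => intro p _; exact ⟨1, by simp [katoD_one]⟩
  | inter s t _ _ ihs iht =>
    rintro p ⟨hps, hpt⟩
    obtain ⟨f, hpf, hfs⟩ := ihs p hps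
    obtain ⟨g, hpg, hgt⟩ := iht p hpt
    exact ⟨f * g, by rw [katoD_mul]; exact ⟨hpf, hpg⟩,
      by rw [katoD_mul]; exact Set.inter_subset_inter hfs hgt⟩
  | sUnion S _ ih =>
    rintro p ⟨s, hsS, hps⟩
    obtain ⟨f, hpf, hfs⟩ := ih s hsS p hps
    exact ⟨f, hpf, hfs.trans (Set.subset_sUnion_of_mem hsS)⟩

theorem katoSpec_t0 : T0Space (KatoSpec M) := by
  rw [t0Space_iff_inseparable]
  intro p q h
  rw [inseparable_iff_forall_isOpen] at h
  apply Subtype.ext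
  ext f
  have := h (KatoD f) (katoD_isOpen f)
  simp only [KatoD, Set.mem_setOf_eq] at this
  exact not_iff_not.mp this

/-- Union of a set of primes is prime. -/
theorem primeUnion_isPrime (S : Set (KatoSpec M)) :
    IsMonoidPrime {x : M | ∃ p ∈ S, x ∈ p.1} := by
  refine ⟨?_, ?_, ?_⟩
  · rintro x ⟨p, hp, hx⟩ m; exact ⟨p, hp, p.2.1 x hx m⟩
  · rintro ⟨p, hp, h1⟩; exact p.2.2.1 h1
  · rintro x y hx hy ⟨p, hp, hxy⟩
    exact p.2.2.2 x y (fun h => hx ⟨p, hp, h⟩) (fun h => hy ⟨p, hp, h⟩) hxy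

/-- The supremum operator on `KatoSpec M`. -/
def katoSup (S : Set (KatoSpec M)) : KatoSpec M :=
  ⟨_, primeUnion_isPrime S⟩

theorem katoSpec_MCJS : MCJS (Set.range fun f : M => KatoD f) := by
  refine ⟨fun p q => p.1 ⊆ q.1, katoSup, fun p => subset_rfl,
    fun p q r h1 h2 => h1.trans h2, fun p q h1 h2 => Subtype.ext (h1.antisymm h2),
    fun A => ⟨fun p hp x hx => ⟨p, hp, hx⟩, ?_⟩, ?_⟩
  · rintro b hb x ⟨p, hp, hx⟩; exact hb p hp hx
  · rintro A U ⟨f, rfl⟩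
    constructor
    · rintro h ⟨p, hp, hf⟩; exact h hp hf
    · intro h p hp hf; exact h ⟨p, hp, hf⟩

theorem katoSpec_monoidalBase :
    IsMonoidalBase (Set.range fun f : M => KatoD f) := by
  refine ⟨?_, ?_, ?_, ?_⟩
  · rintro U ⟨f, rfl⟩; exact katoD_isOpen f
  · intro V hV p hp
    obtain ⟨f, hpf, hfV⟩ := katoD_base V hV p hp
    exact ⟨KatoD f, ⟨f, rfl⟩, hpf, hfV⟩
  · exact ⟨1, katoD_one⟩
  · rintro U ⟨f, rfl⟩ V ⟨g, rfl⟩; exact ⟨f * g, katoD_mul f g⟩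

/-- Every open blob of `KatoSpec M` is a basic open. -/
theorem openBlob_eq_katoD {U : Set (KatoSpec M)} (hU : IsOpen U) (hb : IsBlob U) :
    ∃ f : M, U = KatoD f := by
  obtain ⟨p, rfl⟩ := hb
  have hpU : p ∈ ⋂₀ {W : Set (KatoSpec M) | IsOpen W ∧ p ∈ W} :=
    fun W hW => hW.2
  obtain ⟨f, hpf, hfU⟩ := katoD_base _ hU p hpU
  refine ⟨f, subset_antisymm ?_ hfU⟩
  exact Set.sInter_subset_of_mem ⟨katoD_isOpen f, hpf⟩

theorem prod_notMem_prime (q : KatoSpec M) (l : List M) (h : ∀ y ∈ l, y ∉ q.1) :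
    l.prod ∉ q.1 := by
  induction l with
  | nil => simpa using q.2.2.1
  | cons a l ih =>
    rw [List.prod_cons]
    exact q.2.2.2 a l.prod (h a (by simp)) (ih fun y hy => h y (List.mem_cons_of_mem a hy))

theorem katoSpec_condStar : CondStar (KatoSpec M) := by
  intro S hS V hV hSV
  classical
  set s : Set M := {f | KatoD f ∈ S} with hs
  set N := Submonoid.closure s with hN
  -- the prime p* = {x | ∀ m, x * m ∉ N}
  have hp : IsMonoidPrime {x : M | ∀ m : M, x * m ∉ N} := by
    refine ⟨?_, ?_, ?_⟩
    · intro x hx m m' h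
      exact hx (m * m') (by rwa [← mul_assoc])
    · intro h; exact h 1 (by simpa using N.one_mem)
    · intro x y hx hy hxy
      simp only [Set.mem_setOf_eq, not_forall, not_not] at hx hy
      obtain ⟨a, ha⟩ := hx
      obtain ⟨b, hb⟩ := hy
      exact hxy (a * b) (by rw [mul_mul_mul_comm]; exact N.mul_mem ha hb)
  set p : KatoSpec M := ⟨_, hp⟩ with hpdef
  have hpS : p ∈ ⋂₀ S := by
    intro U hU
    obtain ⟨f, rfl⟩ := openBlob_eq_katoD (hS U hU).1 (hS U hU).2
    have hfs : f ∈ s := hU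
    intro hfp
    exact hfp 1 (by simpa using Submonoid.subset_closure hfs)
  obtain ⟨g, hpg, hgV⟩ := katoD_base V hV p (hSV hpS)
  simp only [KatoD, Set.mem_setOf_eq, hpdef, not_forall, not_not] at hpg
  obtain ⟨m, hm⟩ : ∃ m, g * m ∈ N := by
    by_contra hc; push_neg at hc; exact hpg hc
  obtain ⟨l, hl, hlprod⟩ := Submonoid.exists_list_of_mem_closure hm
  refine ⟨(l.map KatoD).toFinset, ?_, ?_⟩
  · intro t ht
    simp only [List.coe_toFinset, List.mem_map, Set.mem_setOf_eq] at ht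
    obtain ⟨y, hy, rfl⟩ := ht
    exact hl y hy
  · intro q hq
    apply hgV
    have hql : ∀ y ∈ l, y ∉ q.1 := by
      intro y hy
      have : KatoD y ∈ ((l.map KatoD).toFinset : Set (Set (KatoSpec M))) := by
        simp only [List.coe_toFinset, List.mem_map]
        exact ⟨y, hy, rfl⟩
      exact hq _ this
    have := prod_notMem_prime q l hql
    rw [hlprod] at this
    intro hgq
    exact this (q.2.1 g hgq m)

end KatoBasics

section Transport

variable {X : Type*} {Y : Type*} [TopologicalSpace X] [TopologicalSpace Y]

theorem transport_base_mcjs (e : X ≃ₜ Y) {C : Set (Set Y)}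
    (hC : IsMonoidalBase C) (hM : MCJS C) :
    ∃ B : Set (Set X), IsMonoidalBase B ∧ MCJS B := by
  refine ⟨(fun V => e ⁻¹' V) '' C, ⟨?_, ?_, ?_, ?_⟩, ?_⟩
  · rintro U ⟨V, hV, rfl⟩; exact (hC.open_mem V hV).preimage e.continuous
  · intro V hV x hx
    obtain ⟨W, hW, hxW, hWV⟩ := hC.is_base (e '' V) (e.isOpenMap V hV) (e x) ⟨x, hx, rfl⟩
    refine ⟨e ⁻¹' W, ⟨W, hW, rfl⟩, hxW, ?_⟩
    intro y hy
    have := hWV hy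
    obtain ⟨z, hz, hez⟩ := this
    rwa [← e.injective hez]
  · exact ⟨Set.univ, hC.univ_mem, by simp⟩
  · rintro U ⟨V, hV, rfl⟩ U' ⟨V', hV', rfl⟩
    exact ⟨V ∩ V', hC.inter_mem V hV V' hV', by simp [Set.preimage_inter]⟩
  · obtain ⟨le, s, hrefl, htrans, hanti, hsup, hbase⟩ := hM
    refine ⟨fun x y => le (e x) (e y), fun A => e.symm (s (e '' A)),
      fun x => hrefl _, fun x y z h1 h2 => htrans _ _ _ h1 h2,
      fun x y h1 h2 => e.injective (hanti _ _ h1 h2), ?_, ?_⟩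
    · intro A
      constructor
      · intro a ha
        have := (hsup (e '' A)).1 (e a) ⟨a, ha, rfl⟩
        simpa using this
      · intro b hb
        have := (hsup (e '' A)).2 (e b) (by rintro z ⟨a, ha, rfl⟩; exact hb a ha)
        simpa using this
    · rintro A U ⟨V, hV, rfl⟩
      have h1 : A ⊆ e ⁻¹' V ↔ e '' A ⊆ V := Set.image_subset_iff.symm
      rw [h1, hbase (e '' A) V hV]
      simp

theorem transport_condStar (e : X ≃ₜ Y) (hY : CondStar Y) : CondStar X := by
  intro S hS V hV hSV
  classical
  -- image family in Y
  set S' : Set (Set Y) := (fun U => e.symm ⁻¹' U) '' S with hS'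
  have hblob : ∀ U ∈ S, IsOpen (e.symm ⁻¹' U) ∧ IsBlob (e.symm ⁻¹' U) := by
    rintro U hU
    have hUo := (hS U hU).1
    obtain ⟨a, rfl⟩ := (hS U hU).2
    refine ⟨hUo.preimage e.symm.continuous, e a, ?_⟩
    ext y
    simp only [Set.mem_preimage, Set.mem_sInter, Set.mem_setOf_eq]
    constructor
    · intro h W hW
      have := h (e ⁻¹' W) ⟨hW.1.preimage e.continuous, hW.2⟩
      simpa using this
    · intro h W hW
      have := h (e.symm ⁻¹' W) ⟨hW.1.preimage e.symm.continuous, by simpa using hW.2⟩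
      simpa using this
  have hint : ⋂₀ S' ⊆ e.symm ⁻¹' V := by
    rw [hS', Set.sInter_image]
    intro y hy
    simp only [Set.mem_iInter] at hy
    apply hSV
    intro U hU
    exact hy U hU
  obtain ⟨T', hT'S, hT'V⟩ := hY S' (fun U' hU' => by
    obtain ⟨U, hU, rfl⟩ := hU'; exact hblob U hU)
    (e.symm ⁻¹' V) (hV.preimage e.symm.continuous) hint
  refine ⟨T'.image (fun W => e ⁻¹' W), ?_, ?_⟩
  · intro t ht
    simp only [Finset.coe_image, Set.mem_image, Finset.mem_coe] at ht
    obtain ⟨W, hW, rfl⟩ := ht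
    obtain ⟨U, hU, rfl⟩ := hT'S hW
    have : e ⁻¹' (e.symm ⁻¹' U) = U := by ext x; simp
    rwa [this]
  · intro x hx
    have hx' : e x ∈ ⋂₀ (T' : Set (Set Y)) := by
      intro W hW
      have : e ⁻¹' W ∈ ((T'.image (fun W => e ⁻¹' W) : Finset (Set X)) : Set (Set X)) := by
        simp only [Finset.coe_image, Set.mem_image, Finset.mem_coe]
        exact ⟨W, hW, rfl⟩
      exact hx _ this
    have := hT'V hx'
    simpa using this

end Transport

section Main

variable {X : Type u} [TopologicalSpace X]

/-- Every member of a monoidal base is a blob, given the MCJS structure. -/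
theorem base_isBlob {B : Set (Set X)} (hB : IsMonoidalBase B)
    {le : X → X → Prop} {s : Set X → X} (h : IsMCJSWith B le s)
    {U : Set X} (hU : U ∈ B) : IsBlob U := by
  obtain ⟨-, -, -, -, hbase⟩ := h
  refine ⟨s U, subset_antisymm ?_ ?_⟩
  · intro x hx V hV
    obtain ⟨W, hWB, hsW, hWV⟩ := hB.is_base V hV.1 (s U) hV.2
    exact hWV ((hbase U W hWB).2 hsW hx)
  · exact Set.sInter_subset_of_mem ⟨hB.open_mem U hU, (hbase U U hU).1 subset_rfl⟩

theorem main_reverse {B : Set (Set X)} (hB : IsMonoidalBase B)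
    {le : X → X → Prop} {s : Set X → X} (hM : IsMCJSWith B le s)
    (hT : T0Space X) (hC : CondStar X) :
    letI := baseMonoid hB
    Nonempty (X ≃ₜ KatoSpec ↥B) := by
  letI := baseMonoid hB
  obtain ⟨hrefl, htrans, hanti, hsup, hbase⟩ := hM
  have hmul : ∀ U V : ↥B, (U * V).1 = U.1 ∩ V.1 := fun U V => rfl
  have hone : ((1 : ↥B) : Set X) = Set.univ := rfl
  -- the map
  have hprime : ∀ x : X, IsMonoidPrime {U : ↥B | x ∉ U.1} := by
    intro x
    refine ⟨?_, ?_, ?_⟩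
    · intro U hU V h
      rw [hmul] at h
      exact hU h.1
    · intro h; exact h (by rw [hone]; trivial)
    · intro U V hU hV h
      simp only [Set.mem_setOf_eq, not_not] at hU hV
      rw [Set.mem_setOf_eq, hmul] at h
      exact h ⟨hU, hV⟩
  set φ : X → KatoSpec ↥B := fun x => ⟨_, hprime x⟩ with hφ
  have hφmem : ∀ (x : X) (U : ↥B), φ x ∈ KatoD U ↔ x ∈ U.1 := by
    intro x U
    simp [KatoD, hφ]
    show ¬¬ (x ∈ U.1) ↔ x ∈ U.1
    exact not_not
  -- injectivity
  have hinj : Function.Injective φ := by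
    intro x y hxy
    apply Inseparable.eq
    rw [inseparable_iff_forall_isOpen]
    intro V hV
    constructor
    · intro hx
      obtain ⟨U, hUB, hxU, hUV⟩ := hB.is_base V hV x hx
      have : (⟨U, hUB⟩ : ↥B) ∉ (φ x).1 := not_not.mpr hxU
      rw [hxy] at this
      exact hUV (not_not.mp this)
    · intro hy
      obtain ⟨U, hUB, hyU, hUV⟩ := hB.is_base V hV y hy
      have : (⟨U, hUB⟩ : ↥B) ∉ (φ y).1 := not_not.mpr hyU
      rw [← hxy] at this
      exact hUV (not_not.mp this)
  -- surjectivity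
  have hsurj : Function.Surjective φ := by
    intro p
    set F : Set (Set X) := (fun U : ↥B => U.1) '' {U : ↥B | U ∉ p.1} with hF
    set x : X := s (⋂₀ F) with hx
    have hkey : ∀ U : ↥B, (x ∈ U.1 ↔ U ∉ p.1) := by
      intro U
      constructor
      · intro hxU
        have hAU : ⋂₀ F ⊆ U.1 := (hbase (⋂₀ F) U.1 U.2).2 hxU
        obtain ⟨T, hTS, hTU⟩ := hC F (by
          rintro _ ⟨V, hV, rfl⟩
          exact ⟨hB.open_mem V.1 V.2, base_isBlob hB ⟨hrefl, htrans, hanti, hsup, hbase⟩ V.2⟩)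
          U.1 (hB.open_mem U.1 U.2) hAU
        -- find W ∈ B, W ∉ p, W.1 ⊆ ⋂₀ T
        have hfin : ∀ T : Finset (Set X), ↑T ⊆ F →
            ∃ W : ↥B, W ∉ p.1 ∧ W.1 ⊆ ⋂₀ (T : Set (Set X)) := by
          classical
          intro T
          induction T using Finset.induction_on with
          | empty => exact fun _ => ⟨1, p.2.2.1, by simp [hone]⟩
          | @insert t T' ht ih =>
            intro hTS
            have htF : t ∈ F := hTS (by simp)
            obtain ⟨V, hVp, rfl⟩ := htF
            obtain ⟨W, hWp, hWT⟩ := ih (fun u hu => hTS (by simp [hu]))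
            refine ⟨V * W, p.2.2.2 V W hVp hWp, ?_⟩
            rw [hmul, Finset.coe_insert, Set.sInter_insert]
            exact Set.inter_subset_inter subset_rfl hWT
        obtain ⟨W, hWp, hWT⟩ := hfin T hTS
        have hWU : W.1 ⊆ U.1 := hWT.trans hTU
        intro hUp
        have : U * W ∈ p.1 := p.2.1 U hUp W
        have hUW : U * W = W := Subtype.ext (by rw [hmul]; exact Set.inter_eq_self_of_subset_right hWU)
        rw [hUW] at this
        exact hWp this
      · intro hUp
        have : ⋂₀ F ⊆ U.1 := Set.sInter_subset_of_mem ⟨U, hUp, rfl⟩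
        exact (hbase (⋂₀ F) U.1 U.2).1 this
    refine ⟨x, Subtype.ext ?_⟩
    ext U
    simp only [hφ, Set.mem_setOf_eq]
    rw [← not_iff_not, not_not]
    exact hkey U
  -- continuity
  have hcont : Continuous φ := by
    apply continuous_generateFrom_iff.mpr
    rintro _ ⟨U, rfl⟩
    have : φ ⁻¹' KatoD U = U.1 := by
      ext x
      simp [hφmem]
    rw [this]
    exact hB.open_mem U.1 U.2
  -- openness
  have hopen : IsOpenMap φ := by
    intro V hV
    have : φ '' V = ⋃₀ {W : Set (KatoSpec ↥B) | ∃ U : ↥B, U.1 ⊆ V ∧ W = KatoD U} := by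
      ext p
      constructor
      · rintro ⟨x, hx, rfl⟩
        obtain ⟨U, hUB, hxU, hUV⟩ := hB.is_base V hV x hx
        exact ⟨KatoD ⟨U, hUB⟩, ⟨⟨U, hUB⟩, hUV, rfl⟩, (hφmem x ⟨U, hUB⟩).2 hxU⟩
      · rintro ⟨_, ⟨U, hUV, rfl⟩, hp⟩
        obtain ⟨x, rfl⟩ := hsurj p
        exact ⟨x, hUV ((hφmem x U).1 hp), rfl⟩
    rw [this]
    apply isOpen_sUnion
    rintro _ ⟨U, _, rfl⟩
    exact katoD_isOpen U
  exact ⟨Equiv.toHomeomorphOfContinuousOpen (Equiv.ofBijective φ ⟨hinj, hsurj⟩) hcont hopen⟩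

end Main

/-- Proposition 3.2 of the paper: `X` is homeomorphic to the Kato
spectrum of some commutative monoid iff `X` is `T₀`, some monoidal base makes `X` an
𝕄-complete join semilattice, and condition (*) holds. -/
theorem stmt11 {X : Type u} [TopologicalSpace X] :
    (∃ (M : Type u) (_ : CommMonoid M), Nonempty (X ≃ₜ KatoSpec M)) ↔
      (T0Space X ∧ (∃ B : Set (Set X), IsMonoidalBase B ∧ MCJS B) ∧ CondStar X) := by
  constructor
  · rintro ⟨M, hM, ⟨e⟩⟩
    haveI : T0Space (KatoSpec M) := katoSpec_t0
    refine ⟨e.isEmbedding.t0Space, ?_, ?_⟩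
    · exact transport_base_mcjs e katoSpec_monoidalBase katoSpec_MCJS
    · exact transport_condStar e katoSpec_condStar
  · rintro ⟨hT, ⟨B, hB, le, s, hM⟩, hC⟩
    exact ⟨↥B, baseMonoid hB, main_reverse hB hM hT hC⟩
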